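/- arXiv:2011.05681 — 3 statements merged into one kernel-verified Lean document; each statement's English description precedes it below -/
import Mathlib

section
/- Under the hypotheses of the previous ODE (with α ≠ (n−1)/(2n)), the solution w satisfies w' > 0 on (δ, R+ε), w' is decreasing there, and hence for all r ∈ (δ, R+ε): 0 ≤ w(r) ≤ C(n, α, R/δ) · (r − δ), where one may take C = 2(n+1)/(2α+n−1) · δ · [((R+ε)/δ)^{(n+2α−1)/((n+1)α)} − 1] / δ, i.e. w(r) ≤ w'(δ⁺)(r − δ). -/
/-!
With `A = (n+1)/(2α+n-1)` and `β = (2αn-n+1)/((n+1)α)`, the function `W` is the profile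
`-A r² + c₁ r^β`, and the choice of `c₁` makes `w'(r) = 2 A r ((b/r)^(2-β) - 1)` with
`b = R + ε`. This is positive for `r < b`, and strictly decreasing because `β ≤ 1` (i.e. `α < 1`).
Hence `w` is increasing and concave on `(0, b]`, so it lies below its tangent line at `δ`, whose
slope `w'(δ)` is exactly `C`.
-/

open Set

noncomputable def radialProfile (A c β r : ℝ) : ℝ := -A * r ^ 2 + c * r ^ β

namespace radialProfile

variable {A c β b r δ : ℝ}

theorem hasDerivAt (hr : 0 < r) :
    HasDerivAt (radialProfile A c β) (c * β * r ^ (β - 1) - 2 * A * r) r := by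
  have hsq : HasDerivAt (fun x : ℝ => x ^ 2) (2 * r) r := by simpa using hasDerivAt_pow 2 r
  exact ((hsq.const_mul (-A)).fun_add
    ((Real.hasDerivAt_rpow_const (p := β) (Or.inl hr.ne')).const_mul c)).congr_deriv (by ring)

theorem continuousOn : ContinuousOn (radialProfile A c β) (Ioi 0) :=
  fun _ hr => (hasDerivAt hr).continuousAt.continuousWithinAt

theorem deriv_eq (hr : 0 < r) :
    deriv (radialProfile A c β) r = c * β * r ^ (β - 1) - 2 * A * r :=
  (hasDerivAt hr).deriv

/-- The normalization `c β = 2 A b ^ (2 - β)` is the Neumann condition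
`deriv (radialProfile A c β) b = 0`. -/
theorem deriv_eq_of_mul_eq (hr : 0 < r) (hb : 0 ≤ b) (hcβ : c * β = 2 * A * b ^ (2 - β)) :
    deriv (radialProfile A c β) r = 2 * A * r * ((b / r) ^ (2 - β) - 1) := by
  have hr2 : r ^ (β - 1) = r / r ^ (2 - β) := by
    rw [show β - 1 = 1 - (2 - β) by ring, Real.rpow_sub hr, Real.rpow_one]
  have : 0 < r ^ (2 - β) := Real.rpow_pos_of_pos hr _
  rw [deriv_eq hr, hcβ, hr2, Real.div_rpow hb hr.le]
  field_simp

theorem deriv_pos (hA : 0 < A) (hβ : β < 2) (hr : 0 < r) (hrb : r < b)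
    (hcβ : c * β = 2 * A * b ^ (2 - β)) : 0 < deriv (radialProfile A c β) r := by
  rw [deriv_eq_of_mul_eq hr (hr.trans hrb).le hcβ]
  have : 1 < (b / r) ^ (2 - β) := Real.one_lt_rpow ((one_lt_div hr).2 hrb) (by linarith)
  have := mul_pos (mul_pos two_pos hA) hr
  nlinarith

theorem strictAntiOn_deriv (hA : 0 < A) (hcβ : 0 ≤ c * β) (hβ : β ≤ 1) :
    StrictAntiOn (deriv (radialProfile A c β)) (Ioi 0) := by
  intro x hx y hy hxy
  have hpow : y ^ (β - 1) ≤ x ^ (β - 1) := Real.rpow_le_rpow_of_nonpos hx hxy.le (by linarith)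
  have := mul_le_mul_of_nonneg_left hpow hcβ
  rw [deriv_eq hx, deriv_eq hy]
  nlinarith

theorem strictMonoOn (hA : 0 < A) (hβ : β < 2) (hcβ : c * β = 2 * A * b ^ (2 - β)) :
    StrictMonoOn (radialProfile A c β) (Ioc 0 b) := by
  refine strictMonoOn_of_deriv_pos (convex_Ioc 0 b) (continuousOn.mono Ioc_subset_Ioi_self) ?_
  rw [interior_Ioc]
  exact fun r hr => deriv_pos hA hβ hr.1 hr.2 hcβ

theorem sub_le_deriv_mul_sub (hA : 0 < A) (hcβ : 0 ≤ c * β) (hβ : β ≤ 1) (hδ : 0 < δ)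
    (hδr : δ < r) :
    radialProfile A c β r - radialProfile A c β δ ≤
      deriv (radialProfile A c β) δ * (r - δ) := by
  have hanti := strictAntiOn_deriv hA hcβ hβ
  rw [← interior_Ioi] at hanti
  have hconcave := (hanti.strictConcaveOn_of_deriv (convex_Ioi 0) continuousOn).concaveOn
  have hslope :=
    hconcave.slope_le_deriv hδ (hδ.trans hδr) hδr (hasDerivAt hδ).differentiableAt
  rwa [slope_def_field, div_le_iff₀ (sub_pos.2 hδr)] at hslope

end radialProfile

section Exponents

variable {n α : ℝ}

theorem radial_exponent_eq (hα : 0 < α) (hn : 1 ≤ n) :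
    (2 * α * n - n + 1) / ((n + 1) * α) = 2 - (n + 2 * α - 1) / ((n + 1) * α) := by
  have : (n + 1) * α ≠ 0 := by positivity
  field_simp
  ring

theorem radial_exponent_le_one (hα0 : 0 < α) (hα1 : α < 1) (hn : 1 ≤ n) :
    (2 * α * n - n + 1) / ((n + 1) * α) ≤ 1 := by
  rw [div_le_one (by positivity)]
  nlinarith

theorem radial_coeff_mul_exponent (hα0 : 0 < α) (hn : 1 ≤ n) (hαn : α ≠ (n - 1) / (2 * n))
    (b : ℝ) :
    2 * (n + 1) ^ 2 * α / ((2 * α + n - 1) * (2 * α * n - n + 1)) *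
        b ^ ((n + 2 * α - 1) / ((n + 1) * α)) * ((2 * α * n - n + 1) / ((n + 1) * α)) =
      2 * ((n + 1) / (2 * α + n - 1)) * b ^ (2 - (2 * α * n - n + 1) / ((n + 1) * α)) := by
  have : 2 * α * n - n + 1 ≠ 0 := by
    contrapose! hαn
    field_simp
    linarith
  have : 2 * α + n - 1 ≠ 0 := by linarith
  have : (n + 1) * α ≠ 0 := by positivity
  rw [radial_exponent_eq hα0 hn, sub_sub_cancel, mul_right_comm]
  congr 1
  rw [← radial_exponent_eq hα0 hn, div_mul_div_comm, div_eq_iff (by positivity)]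
  field_simp

end Exponents

theorem stmt_7_general (n : ℕ) (hn : 2 ≤ n) (α δ R ε : ℝ)
    (hα0 : 0 < α) (hα1 : α < 1) (hαn : α ≠ ((n : ℝ) - 1) / (2 * n))
    (hδ : 0 < δ)
    (c₁ : ℝ)
    (hc₁ : c₁ = 2 * ((n : ℝ) + 1) ^ 2 * α /
        ((2 * α + (n : ℝ) - 1) * (2 * α * (n : ℝ) - (n : ℝ) + 1)) *
        (R + ε) ^ (((n : ℝ) + 2 * α - 1) / (((n : ℝ) + 1) * α)))
    (W : ℝ → ℝ)
    (hW : W = fun r : ℝ =>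
      -(((n : ℝ) + 1) / (2 * α + (n : ℝ) - 1)) * r ^ 2 +
        c₁ * r ^ ((2 * α * (n : ℝ) - (n : ℝ) + 1) / (((n : ℝ) + 1) * α)))
    (w : ℝ → ℝ) (hw : w = fun r : ℝ => W r - W δ)
    (C : ℝ)
    (hC : C = 2 * ((n : ℝ) + 1) / (2 * α + (n : ℝ) - 1) * δ *
        (((R + ε) / δ) ^ (((n : ℝ) + 2 * α - 1) / (((n : ℝ) + 1) * α)) - 1)) :
    (∀ r ∈ Set.Ioo δ (R + ε), 0 < deriv w r) ∧
      StrictAntiOn (deriv w) (Set.Ioo δ (R + ε)) ∧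
      ∀ r ∈ Set.Ioo δ (R + ε), 0 ≤ w r ∧ w r ≤ C * (r - δ) := by
  set b := R + ε
  rcases le_or_gt b δ with hbδ | hδb
  · simp [Ioo_eq_empty_of_le hbδ, StrictAntiOn]
  have hb : 0 < b := hδ.trans hδb
  have hn1 : (1 : ℝ) ≤ n := by exact_mod_cast one_le_two.trans hn
  set A := ((n : ℝ) + 1) / (2 * α + n - 1)
  set β := (2 * α * (n : ℝ) - n + 1) / ((n + 1) * α)
  have hA : 0 < A := div_pos (by linarith) (by linarith)
  have hβ : β = 2 - ((n : ℝ) + 2 * α - 1) / ((n + 1) * α) := radial_exponent_eq hα0 hn1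
  have hβ1 : β ≤ 1 := radial_exponent_le_one hα0 hα1 hn1
  have hcβ : c₁ * β = 2 * A * b ^ (2 - β) := hc₁ ▸ radial_coeff_mul_exponent hα0 hn1 hαn b
  have hW' : W = radialProfile A c₁ β := hW
  have hderiv : deriv w = deriv (radialProfile A c₁ β) := by
    rw [hw, hW', deriv_sub_const_fun]
  have hCδ : C = deriv (radialProfile A c₁ β) δ := by
    rw [radialProfile.deriv_eq_of_mul_eq hδ hb.le hcβ, hC, hβ, sub_sub_cancel]
    ring
  have hcβ0 : 0 ≤ c₁ * β := hcβ ▸ mul_nonneg (by positivity) (Real.rpow_nonneg hb.le _)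
  refine ⟨fun r hr => hderiv ▸ radialProfile.deriv_pos hA (by linarith) (hδ.trans hr.1) hr.2 hcβ,
    hderiv ▸ (radialProfile.strictAntiOn_deriv hA hcβ0 hβ1).mono fun r hr => hδ.trans hr.1,
    fun r hr => ⟨?_, ?_⟩⟩
  · rw [hw, hW', sub_nonneg]
    exact (radialProfile.strictMonoOn hA (by linarith) hcβ).monotoneOn ⟨hδ, hδb.le⟩
      ⟨hδ.trans hr.1, hr.2.le⟩ hr.1.le
  · rw [hw, hW', hCδ]
    exact radialProfile.sub_le_deriv_mul_sub hA hcβ0 hβ1 hδ hr.1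

theorem stmt_7 (n : ℕ) (hn : 2 ≤ n) (α δ R ε : ℝ)
    (hα0 : 0 < α) (hα1 : α < 1) (hαn : α ≠ ((n : ℝ) - 1) / (2 * n))
    (hδ : 0 < δ) (hδR : δ < R) (hε : 0 < ε)
    (c₁ : ℝ)
    (hc₁ : c₁ = 2 * ((n : ℝ) + 1) ^ 2 * α /
        ((2 * α + (n : ℝ) - 1) * (2 * α * (n : ℝ) - (n : ℝ) + 1)) *
        (R + ε) ^ (((n : ℝ) + 2 * α - 1) / (((n : ℝ) + 1) * α)))
    (W : ℝ → ℝ)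
    (hW : W = fun r : ℝ =>
      -(((n : ℝ) + 1) / (2 * α + (n : ℝ) - 1)) * r ^ 2 +
        c₁ * r ^ ((2 * α * (n : ℝ) - (n : ℝ) + 1) / (((n : ℝ) + 1) * α)))
    (w : ℝ → ℝ) (hw : w = fun r : ℝ => W r - W δ)
    (C : ℝ)
    (hC : C = 2 * ((n : ℝ) + 1) / (2 * α + (n : ℝ) - 1) * δ *
        (((R + ε) / δ) ^ (((n : ℝ) + 2 * α - 1) / (((n : ℝ) + 1) * α)) - 1)) :
    (∀ r ∈ Set.Ioo δ (R + ε), 0 < deriv w r) ∧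
      StrictAntiOn (deriv w) (Set.Ioo δ (R + ε)) ∧
      ∀ r ∈ Set.Ioo δ (R + ε), 0 ≤ w r ∧ w r ≤ C * (r - δ) :=
  stmt_7_general n hn α δ R ε hα0 hα1 hαn hδ c₁ hc₁ W hW w hw C hC
end

section
/- Fix r > 0, ε > 0 with ε < r, and α, β ∈ [0,1] with α + β = 1. For a unit vector ν at angle θ ∈ [0, π] to the radial direction, define A(θ) = α√(r² + 2rε cos θ + ε²) + β · (average over y in the (n−1)-disk T_ε = {y : |y| ≤ ε, y ⊥ e_n} of √(r² − 2r y_{n−1} sin θ + |y|²)). Then A attains its maximum on [0, π] at θ = 0; in particular A(θ) ≤ α(r + ε) + β·(average over T_ε of √(r² + |y|²)). -/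
/-!
The radial term is largest at θ = 0 because cos θ ≤ 1. For the averaged term, pair y with -y:
the ball and Lebesgue measure are invariant under y ↦ -y, while the tilt -2 r y_{n-1} sin θ
changes sign. With a = r² + |y|² and b the tilt, |b| ≤ a, and concavity of √ gives
√(a + b) + √(a - b) ≤ 2√a, so the average is at most that of √(r² + |y|²), its value at θ = 0.
-/

open MeasureTheory

lemma Real.sqrt_add_add_sqrt_sub_le {a b : ℝ} (hb : |b| ≤ a) :
    √(a + b) + √(a - b) ≤ 2 * √a := by
  have h := Real.strictConcaveOn_sqrt.concaveOn.2 (x := a + b) (y := a - b)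
    (Set.mem_Ici.2 (by linarith [neg_abs_le b])) (Set.mem_Ici.2 (by linarith [le_abs_self b]))
    (by norm_num : (0:ℝ) ≤ 1/2) (by norm_num : (0:ℝ) ≤ 1/2) (by norm_num)
  simp only [smul_eq_mul] at h
  ring_nf at h ⊢
  linarith

namespace MeasureTheory

variable {G : Type*} [MeasurableSpace G]

lemma Measure.IsNegInvariant.restrict [InvolutiveNeg G] [MeasurableNeg G] {μ : Measure G}
    [μ.IsNegInvariant] {s : Set G} (hs : MeasurableSet s) (hs_neg : -s = s) :
    (μ.restrict s).IsNegInvariant := by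
  constructor
  conv_rhs => rw [← Measure.map_neg_eq_self μ]
  rw [Measure.neg_def, Measure.restrict_map measurable_neg hs, Set.neg_preimage, hs_neg]

lemma average_le_average_of_add_comp_neg_le [AddGroup G] [MeasurableNeg G] {μ : Measure G}
    [μ.IsNegInvariant] {f g : G → ℝ} (hf : Integrable f μ) (hg : Integrable g μ)
    (hfg : ∀ x, f x + f (-x) ≤ 2 * g x) :
    ⨍ x, f x ∂μ ≤ ⨍ x, g x ∂μ := by
  have hint : ∫ x, f x ∂μ ≤ ∫ x, g x ∂μ := by
    have : ∫ x, (f x + f (-x)) ∂μ ≤ ∫ x, 2 * g x ∂μ :=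
      integral_mono (hf.add hf.comp_neg) (hg.const_mul 2) hfg
    rw [integral_add hf hf.comp_neg, integral_neg_eq_self, integral_const_mul] at this
    linarith
  rw [average_eq, average_eq, smul_eq_mul, smul_eq_mul]
  gcongr

end MeasureTheory

lemma EuclideanSpace.abs_mul_apply_mul_le {ι : Type*} [Fintype ι] (r s : ℝ) (hs : |s| ≤ 1)
    (y : EuclideanSpace ℝ ι) (i : ι) :
    |2 * r * y i * s| ≤ r ^ 2 + ‖y‖ ^ 2 := by
  have hy : |y i| ≤ ‖y‖ := by simpa using PiLp.norm_apply_le y i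
  rw [abs_mul, abs_mul, abs_mul, abs_two]
  have hys : |y i| * |s| ≤ ‖y‖ := by
    simpa using mul_le_mul hy hs (abs_nonneg s) (norm_nonneg y)
  nlinarith [sq_nonneg (|r| - ‖y‖), sq_abs r, abs_nonneg r]

lemma EuclideanSpace.setAverage_sqrt_sub_le {ι : Type*} [Fintype ι] (r s ε : ℝ) (hs : |s| ≤ 1)
    (i : ι) :
    ⨍ y in Metric.closedBall (0 : EuclideanSpace ℝ ι) ε, √(r ^ 2 - 2 * r * y i * s + ‖y‖ ^ 2) ≤
      ⨍ y in Metric.closedBall (0 : EuclideanSpace ℝ ι) ε, √(r ^ 2 + ‖y‖ ^ 2) := by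
  have hneg := Measure.IsNegInvariant.restrict (μ := volume) measurableSet_closedBall
    (show -Metric.closedBall (0 : EuclideanSpace ℝ ι) ε = _ by simp)
  have hcompact := isCompact_closedBall (0 : EuclideanSpace ℝ ι) ε
  refine average_le_average_of_add_comp_neg_le
    ((Continuous.continuousOn (by fun_prop)).integrableOn_compact hcompact)
    ((Continuous.continuousOn (by fun_prop)).integrableOn_compact hcompact) fun y => ?_
  have := Real.sqrt_add_add_sqrt_sub_le (EuclideanSpace.abs_mul_apply_mul_le r s hs y i)
  simp only [PiLp.neg_apply, norm_neg]
  rw [add_comm]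
  convert this using 3 <;> ring

theorem stmt_8_general (m : ℕ) (r ε α β : ℝ) (hr : 0 < r) (hε : 0 < ε)
    (hα : 0 ≤ α) (hβ : 0 ≤ β)
    (A : ℝ → ℝ)
    (hA : A = fun θ : ℝ =>
      α * Real.sqrt (r ^ 2 + 2 * r * ε * Real.cos θ + ε ^ 2) +
        β * ⨍ y in Metric.closedBall (0 : EuclideanSpace ℝ (Fin (m + 1))) ε,
          Real.sqrt (r ^ 2 - 2 * r * y (Fin.last m) * Real.sin θ + ‖y‖ ^ 2)) :
    ∀ θ ∈ Set.Icc (0 : ℝ) Real.pi,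
      A θ ≤ A 0 ∧
        A θ ≤ α * (r + ε) +
          β * ⨍ y in Metric.closedBall (0 : EuclideanSpace ℝ (Fin (m + 1))) ε,
            Real.sqrt (r ^ 2 + ‖y‖ ^ 2) := by
  have hsqrt_sq : √((r + ε) ^ 2) = r + ε := Real.sqrt_sq (by positivity)
  have hA_zero : A 0 = α * (r + ε) +
      β * ⨍ y in Metric.closedBall (0 : EuclideanSpace ℝ (Fin (m + 1))) ε,
        Real.sqrt (r ^ 2 + ‖y‖ ^ 2) := by
    simp only [hA, Real.cos_zero, Real.sin_zero, mul_zero, mul_one, sub_zero]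
    rw [← hsqrt_sq]
    ring_nf
  intro θ _
  have hA_le : A θ ≤ α * (r + ε) +
      β * ⨍ y in Metric.closedBall (0 : EuclideanSpace ℝ (Fin (m + 1))) ε,
        Real.sqrt (r ^ 2 + ‖y‖ ^ 2) := by
    simp only [hA]
    gcongr
    · rw [← hsqrt_sq]
      apply Real.sqrt_le_sqrt
      nlinarith [Real.cos_le_one θ, mul_pos hr hε]
    · exact EuclideanSpace.setAverage_sqrt_sub_le r _ ε (Real.abs_sin_le_one θ) _
  exact ⟨hA_zero ▸ hA_le, hA_le⟩

theorem stmt_8 (m : ℕ) (r ε α β : ℝ) (hr : 0 < r) (hε : 0 < ε) (hεr : ε < r)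
    (hα : 0 ≤ α) (hβ : 0 ≤ β) (hαβ : α + β = 1)
    (A : ℝ → ℝ)
    (hA : A = fun θ : ℝ =>
      α * Real.sqrt (r ^ 2 + 2 * r * ε * Real.cos θ + ε ^ 2) +
        β * ⨍ y in Metric.closedBall (0 : EuclideanSpace ℝ (Fin (m + 1))) ε,
          Real.sqrt (r ^ 2 - 2 * r * y (Fin.last m) * Real.sin θ + ‖y‖ ^ 2)) :
    ∀ θ ∈ Set.Icc (0 : ℝ) Real.pi,
      A θ ≤ A 0 ∧
        A θ ≤ α * (r + ε) +
          β * ⨍ y in Metric.closedBall (0 : EuclideanSpace ℝ (Fin (m + 1))) ε,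
            Real.sqrt (r ^ 2 + ‖y‖ ^ 2) :=
  stmt_8_general m r ε α β hr hε hα hβ A hA
end

section
/- Let r > 0, ε > 0, and let T_ε be the (n−1)-dimensional disk of radius ε centered at 0 orthogonal to a unit vector ν in ℝⁿ, and let x ∈ ℝⁿ, z ∈ ℝⁿ with |x − z| = r ≥ ε and ν = (x−z)/|x−z|. Then for every h ∈ T_ε, r ≤ |x + h − z| ≤ √(r² + ε²), and consequently 0 ≤ (average over h ∈ T_ε of |x + h − z|) − r ≤ ε²/(2r). -/
/-!
For `h ⟂ x - z` Pythagoras gives `‖x + h - z‖² = r² + ‖h‖²`, so on the disk the integrand lies in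
`[r, √(r² + ε²)]`, and `√(r² + ε²) ≤ r + ε² / (2r)`. The disk is a closed ball of the hyperplane
`(ℝ ∙ ν)ᗮ`, on which `μH[n - 1]` is an additive Haar measure; hence the disk has positive finite
measure and the average stays in the same interval.
-/

open MeasureTheory Metric Set Module
open scoped ENNReal

theorem norm_add_mem_Icc_of_inner_eq_zero {E : Type*} [NormedAddCommGroup E]
    [InnerProductSpace ℝ E] {v h : E} {ε : ℝ} (hhv : inner ℝ h v = 0) (hh : ‖h‖ ≤ ε) :
    ‖v + h‖ ∈ Icc ‖v‖ √(‖v‖ ^ 2 + ε ^ 2) := by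
  rw [norm_add_eq_sqrt_iff_real_inner_eq_zero.mpr (real_inner_comm h v ▸ hhv)]
  constructor
  · exact Real.le_sqrt_of_sq_le (by nlinarith [mul_self_nonneg ‖h‖])
  · gcongr
    · nlinarith [norm_nonneg v]
    · nlinarith [norm_nonneg h]

theorem Real.sqrt_sq_add_le {a b : ℝ} (ha : 0 < a) (hb : 0 ≤ b) :
    √(a ^ 2 + b) ≤ a + b / (2 * a) := by
  rw [Real.sqrt_le_left (by positivity)]
  have : (a + b / (2 * a)) ^ 2 = a ^ 2 + b + (b / (2 * a)) ^ 2 := by field_simp; ring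
  nlinarith [sq_nonneg (b / (2 * a))]

theorem setAverage_mem_Icc {α : Type*} [MeasurableSpace α] {μ : Measure α} {s : Set α}
    {f : α → ℝ} {a b : ℝ} (hs : MeasurableSet s) (h0 : μ s ≠ 0) (hfin : μ s ≠ ∞)
    (hf : AEStronglyMeasurable f μ) (hfs : ∀ x ∈ s, f x ∈ Icc a b) :
    ⨍ x in s, f x ∂μ ∈ Icc a b := by
  have hfs_ae : ∀ᵐ x ∂μ.restrict s, f x ∈ Icc a b := (ae_restrict_mem hs).mono hfs
  refine (convex_Icc a b).set_average_mem isClosed_Icc h0 hfin hfs_ae ?_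
  refine Measure.integrableOn_of_bounded hfin hf (M := max |a| |b|) (hfs_ae.mono fun x hx => ?_)
  exact abs_le_max_abs_abs hx.1 hx.2

theorem Submodule.hausdorffMeasure_inter_closedBall {E : Type*} [NormedAddCommGroup E]
    [NormedSpace ℝ E] [MeasurableSpace E] [BorelSpace E] (K : Submodule ℝ E) {d : ℝ} (hd : 0 ≤ d)
    (ε : ℝ) : μH[d] ((K : Set E) ∩ closedBall 0 ε) = μH[d] (closedBall (0 : K) ε) := by
  rw [← K.subtypeₗᵢ.isometry.hausdorffMeasure_image (Or.inl hd)]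
  congr 1
  ext y
  constructor
  · rintro ⟨hyK, hy⟩
    exact ⟨⟨y, hyK⟩, by simpa using hy, rfl⟩
  · rintro ⟨y, hy, rfl⟩
    exact ⟨y.2, by simpa using hy⟩

theorem Submodule.hausdorffMeasure_finrank_inter_closedBall_pos {E : Type*} [NormedAddCommGroup E]
    [NormedSpace ℝ E] [MeasurableSpace E] [BorelSpace E] (K : Submodule ℝ E)
    [FiniteDimensional ℝ K] {ε : ℝ} (hε : 0 < ε) :
    μH[finrank ℝ K] ((K : Set E) ∩ closedBall 0 ε) ≠ 0 := by
  rw [K.hausdorffMeasure_inter_closedBall (Nat.cast_nonneg _)]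
  exact (measure_closedBall_pos _ _ hε).ne'

theorem Submodule.hausdorffMeasure_finrank_inter_closedBall_lt_top {E : Type*}
    [NormedAddCommGroup E] [NormedSpace ℝ E] [MeasurableSpace E] [BorelSpace E]
    (K : Submodule ℝ E) [FiniteDimensional ℝ K] (ε : ℝ) :
    μH[finrank ℝ K] ((K : Set E) ∩ closedBall 0 ε) ≠ ∞ := by
  rw [K.hausdorffMeasure_inter_closedBall (Nat.cast_nonneg _)]
  exact measure_closedBall_lt_top.ne

theorem stmt_9 {n : ℕ} (hn : 2 ≤ n) (r ε : ℝ) (hε : 0 < ε) (hεr : ε ≤ r)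
    (x z ν : EuclideanSpace ℝ (Fin n))
    (hr : dist x z = r) (hν : ν = (r⁻¹ : ℝ) • (x - z)) :
    (∀ h : EuclideanSpace ℝ (Fin n), (inner ℝ h ν : ℝ) = 0 → ‖h‖ ≤ ε →
      r ≤ ‖x + h - z‖ ∧ ‖x + h - z‖ ≤ Real.sqrt (r ^ 2 + ε ^ 2)) ∧
    (0 ≤ (⨍ h in {h : EuclideanSpace ℝ (Fin n) | (inner ℝ h ν : ℝ) = 0 ∧ ‖h‖ ≤ ε},
        ‖x + h - z‖ ∂μH[(n : ℝ) - 1]) - r ∧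
      (⨍ h in {h : EuclideanSpace ℝ (Fin n) | (inner ℝ h ν : ℝ) = 0 ∧ ‖h‖ ≤ ε},
        ‖x + h - z‖ ∂μH[(n : ℝ) - 1]) - r ≤ ε ^ 2 / (2 * r)) := by
  have hr0 : 0 < r := hε.trans_le hεr
  have hxz : ‖x - z‖ = r := by rw [← dist_eq_norm, hr]
  have hν0 : ν ≠ 0 := by
    rw [hν, smul_ne_zero_iff]
    exact ⟨inv_ne_zero hr0.ne', by rw [← norm_pos_iff, hxz]; exact hr0⟩
  have bounds : ∀ h : EuclideanSpace ℝ (Fin n), inner ℝ h ν = 0 → ‖h‖ ≤ ε →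
      ‖x + h - z‖ ∈ Icc r √(r ^ 2 + ε ^ 2) := by
    intro h hhν hh
    rw [hν, inner_smul_right, mul_eq_zero] at hhν
    have := norm_add_mem_Icc_of_inner_eq_zero (v := x - z) (hhν.resolve_left (by positivity)) hh
    rwa [hxz, sub_add_eq_add_sub] at this
  refine ⟨fun h hhν hh => bounds h hhν hh, ?_⟩
  set K := (ℝ ∙ ν)ᗮ
  set D := {h : EuclideanSpace ℝ (Fin n) | inner ℝ h ν = 0 ∧ ‖h‖ ≤ ε}
  have hD : D = (K : Set _) ∩ closedBall 0 ε := by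
    ext h
    simp [D, K, Submodule.mem_orthogonal_singleton_iff_inner_left]
  have hdim : (n : ℝ) - 1 = finrank ℝ K := by
    have : Fact (finrank ℝ (EuclideanSpace ℝ (Fin n)) = (n - 1) + 1) := ⟨by simp; omega⟩
    rw [Submodule.finrank_orthogonal_span_singleton (𝕜 := ℝ) (n := n - 1) hν0,
      Nat.cast_sub (by omega)]
    simp
  have hD_meas : MeasurableSet D := by
    rw [hD]
    exact ((Submodule.isClosed_orthogonal _).inter isClosed_closedBall).measurableSet
  have hD_pos : μH[(n : ℝ) - 1] D ≠ 0 := by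
    rw [hD, hdim]
    exact K.hausdorffMeasure_finrank_inter_closedBall_pos hε
  have hD_fin : μH[(n : ℝ) - 1] D ≠ ∞ := by
    rw [hD, hdim]
    exact K.hausdorffMeasure_finrank_inter_closedBall_lt_top ε
  have havg := setAverage_mem_Icc hD_meas hD_pos hD_fin (by fun_prop)
    fun h hh => bounds h hh.1 hh.2
  have := Real.sqrt_sq_add_le hr0 (sq_nonneg ε)
  exact ⟨by linarith [havg.1], by linarith [havg.2]⟩
end
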